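/- Let V be the N×2 Vandermonde-type matrix with entries V_{n,1} = exp(j·2π·n·d·sin(θ)/λ) and V_{n,2} = exp(j·2π·n·d·sin(θ+Δ)/λ) for n = 0, ..., N-1. Then the two eigenvalues of V*V are N ± |sin(πNd(sinθ − sin(θ+Δ))/λ) / sin(πd(sinθ − sin(θ+Δ))/λ)|, provided sin(πd(sinθ − sin(θ+Δ))/λ) ≠ 0. -/

import Mathlib

/-!
`V*V` is the Gram matrix of two columns of unimodular phases, so it is Hermitian with both
diagonal entries `N`; its eigenvalues are therefore `N ± |g|`, where `g` is the off-diagonal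
entry. That entry is the geometric sum `∑_{n<N} e^{inx}` with `x = 2πd(sin θ − sin(θ+Δ))/λ`,
whose modulus is the Dirichlet-kernel quotient `|sin(Nx/2) / sin(x/2)|`.
-/

open Matrix Complex Finset

theorem Matrix.mem_spectrum_fin_two {K : Type*} [Field K] (M : Matrix (Fin 2) (Fin 2) K) (μ : K) :
    μ ∈ spectrum K M ↔ (μ - M 0 0) * (μ - M 1 1) = M 0 1 * M 1 0 := by
  rw [spectrum.mem_iff, isUnit_iff_isUnit_det, isUnit_iff_ne_zero, not_not, det_fin_two,
    sub_eq_zero]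
  simp [algebraMap_matrix_apply]

theorem Matrix.IsHermitian.mem_spectrum_fin_two_of_apply_eq {M : Matrix (Fin 2) (Fin 2) ℂ}
    (hM : M.IsHermitian) {a : ℂ} (h₀ : M 0 0 = a) (h₁ : M 1 1 = a) (μ : ℂ) :
    μ ∈ spectrum ℂ M ↔ μ = a + ‖M 1 0‖ ∨ μ = a - ‖M 1 0‖ := by
  have hprod : M 0 1 * M 1 0 = (‖M 1 0‖ : ℂ) ^ 2 := by
    rw [← hM.apply 0 1, star_def, conj_mul']
  rw [M.mem_spectrum_fin_two, h₀, h₁, hprod, ← sq, sq_eq_sq_iff_eq_or_eq_neg, sub_eq_iff_eq_add,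
    sub_eq_iff_eq_add, add_comm, neg_add_eq_sub]

theorem norm_sum_range_exp_I_mul (N : ℕ) {x : ℝ} (hx : Real.sin (x / 2) ≠ 0) :
    ‖∑ n ∈ range N, exp (I * (n * x))‖ = |Real.sin (N * x / 2) / Real.sin (x / 2)| := by
  have hnorm_sub_one (y : ℝ) : ‖exp (I * y) - 1‖ = 2 * |Real.sin (y / 2)| := by
    rw [norm_exp_I_mul_ofReal_sub_one, Real.norm_eq_abs, abs_mul, abs_two]
  have hne : exp (I * x) ≠ 1 := by
    rw [← sub_ne_zero, ← norm_ne_zero_iff, hnorm_sub_one]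
    positivity
  have hpow (n : ℕ) : exp (I * (n * x)) = exp (I * x) ^ n := by
    rw [← exp_nat_mul]
    ring_nf
  calc ‖∑ n ∈ range N, exp (I * (n * x))‖
      = ‖(exp (I * x) ^ N - 1) / (exp (I * x) - 1)‖ := by
        simp only [hpow, geom_sum_eq hne]
    _ = |Real.sin (N * x / 2) / Real.sin (x / 2)| := by
        rw [← hpow, norm_div, abs_div, hnorm_sub_one, ← ofReal_natCast, ← ofReal_mul,
          hnorm_sub_one, mul_div_mul_left _ _ two_ne_zero, mul_div_assoc]

theorem Matrix.conjTranspose_mul_self_apply_of_eq_exp {N : ℕ} {ι : Type*}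
    {V : Matrix (Fin N) ι ℂ} {φ : ι → ℝ} (hV : ∀ n k, V n k = exp (I * ((n : ℕ) * φ k)))
    (k l : ι) : (Vᴴ * V) k l = ∑ n ∈ range N, exp (I * (n * ((φ l - φ k : ℝ) : ℂ))) := by
  rw [mul_apply, ← Fin.sum_univ_eq_sum_range]
  refine sum_congr rfl fun n _ => ?_
  rw [conjTranspose_apply, hV, hV, star_def, ← Complex.exp_conj, ← exp_add]
  simp only [map_mul, conj_I, conj_ofReal, map_natCast]
  push_cast
  ring_nf

theorem stmt4_general (N : ℕ) (d lam θ Δ : ℝ)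
    (hdenom : Real.sin (Real.pi * d * (Real.sin θ - Real.sin (θ + Δ)) / lam) ≠ 0)
    (V : Matrix (Fin N) (Fin 2) ℂ)
    (hV1 : ∀ n : Fin N, V n 0 =
      Complex.exp (Complex.I * (2 * Real.pi * (n : ℝ) * d * Real.sin θ / lam)))
    (hV2 : ∀ n : Fin N, V n 1 =
      Complex.exp (Complex.I * (2 * Real.pi * (n : ℝ) * d * Real.sin (θ + Δ) / lam))) :
    ∀ μ : ℂ, μ ∈ spectrum ℂ (Vᴴ * V) ↔
      μ = (N : ℂ) + (|Real.sin (Real.pi * N * d * (Real.sin θ - Real.sin (θ + Δ)) / lam) /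
            Real.sin (Real.pi * d * (Real.sin θ - Real.sin (θ + Δ)) / lam)| : ℝ) ∨
      μ = (N : ℂ) - (|Real.sin (Real.pi * N * d * (Real.sin θ - Real.sin (θ + Δ)) / lam) /
            Real.sin (Real.pi * d * (Real.sin θ - Real.sin (θ + Δ)) / lam)| : ℝ) := by
  set φ : Fin 2 → ℝ :=
    ![2 * Real.pi * d * Real.sin θ / lam, 2 * Real.pi * d * Real.sin (θ + Δ) / lam]
  have hV : ∀ n k, V n k = exp (I * ((n : ℕ) * φ k)) := by
    intro n
    rw [Fin.forall_fin_two, hV1, hV2]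
    simp only [φ, cons_val_zero, cons_val_one, cons_val_fin_one]
    constructor <;> push_cast <;> ring_nf
  have hdiag (k : Fin 2) : (Vᴴ * V) k k = N := by
    simp [conjTranspose_mul_self_apply_of_eq_exp hV]
  have hhalf : (φ 0 - φ 1) / 2 = Real.pi * d * (Real.sin θ - Real.sin (θ + Δ)) / lam := by
    simp only [φ, cons_val_zero, cons_val_one, cons_val_fin_one]; ring
  have hNhalf : N * (φ 0 - φ 1) / 2 =
      Real.pi * N * d * (Real.sin θ - Real.sin (θ + Δ)) / lam := by
    simp only [φ, cons_val_zero, cons_val_one, cons_val_fin_one]; ring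
  have hoff : ‖(Vᴴ * V) 1 0‖ =
      |Real.sin (Real.pi * N * d * (Real.sin θ - Real.sin (θ + Δ)) / lam) /
        Real.sin (Real.pi * d * (Real.sin θ - Real.sin (θ + Δ)) / lam)| := by
    rw [conjTranspose_mul_self_apply_of_eq_exp hV, norm_sum_range_exp_I_mul N (hhalf ▸ hdenom),
      hhalf, hNhalf]
  intro μ
  rw [(isHermitian_conjTranspose_mul_self V).mem_spectrum_fin_two_of_apply_eq (hdiag 0) (hdiag 1),
    hoff]

/-- Lemma 4: the eigenvalues of `V*V` for the `N×2` Vandermonde steering matrix with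
columns corresponding to directions `θ` and `θ+Δ` are
`N ± |sin(πNd(sinθ − sin(θ+Δ))/λ) / sin(πd(sinθ − sin(θ+Δ))/λ)|`. -/
theorem stmt4 (N : ℕ) (hN : 0 < N) (d lam θ Δ : ℝ) (hd : 0 < d) (hlam : 0 < lam)
    (hΔ : Δ ≠ 0)
    (hdenom : Real.sin (Real.pi * d * (Real.sin θ - Real.sin (θ + Δ)) / lam) ≠ 0)
    (V : Matrix (Fin N) (Fin 2) ℂ)
    (hV1 : ∀ n : Fin N, V n 0 =
      Complex.exp (Complex.I * (2 * Real.pi * (n : ℝ) * d * Real.sin θ / lam)))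
    (hV2 : ∀ n : Fin N, V n 1 =
      Complex.exp (Complex.I * (2 * Real.pi * (n : ℝ) * d * Real.sin (θ + Δ) / lam))) :
    ∀ μ : ℂ, μ ∈ spectrum ℂ (Vᴴ * V) ↔
      μ = (N : ℂ) + (|Real.sin (Real.pi * N * d * (Real.sin θ - Real.sin (θ + Δ)) / lam) /
            Real.sin (Real.pi * d * (Real.sin θ - Real.sin (θ + Δ)) / lam)| : ℝ) ∨
      μ = (N : ℂ) - (|Real.sin (Real.pi * N * d * (Real.sin θ - Real.sin (θ + Δ)) / lam) /
            Real.sin (Real.pi * d * (Real.sin θ - Real.sin (θ + Δ)) / lam)| : ℝ) :=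
  stmt4_general N d lam θ Δ hdenom V hV1 hV2
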